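/- Factorization direction of Kwapień's theorem: let T ∈ L(E₁,…,E_m;F) be positive (p₁,…,p_m;r)-dominated, with Pietsch domination measures μ_j on B_{E_j*}⁺ and μ on B_{F**}⁺. Define R_j⁰ : E_j → L_{p_j}(B_{E_j*}⁺, μ_j) by R_j⁰(x)(φ) = φ(x), let X_j be the closure of the range of R_j⁰, and R_j : E_j → X_j the induced operator. Then each R_j is positive p_j-summing with π⁺_{p_j}(R_j) ≤ 1, and the map S₀(R₁⁰(x¹),…,R_m⁰(x^m)) := T(x¹,…,x^m) is well defined and bounded on R₁⁰(E₁) × ⋯ × R_m⁰(E_m), extending to a Cohen positive strongly r*-summing m-linear operator S : X₁ × ⋯ × X_m → F with T = S ∘ (R₁,…,R_m). -/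

import Mathlib

/-!
Write `R⁰_j x = (ω ↦ ω x) ∈ L_{p_j}(μ_j)` and `N_j x = ‖R⁰_j x⁺‖ + ‖R⁰_j x⁻‖`, a seminorm on `E_j`
that agrees with `‖R⁰_j x‖` on positive vectors. Expanding `T x` multilinearly along
`x_j = x_j⁺ - x_j⁻` extends the domination from positive tuples to
`|φ (T x)| ≤ C ‖φ‖_{L_r(ν)} ∏ N_j(x_j)` for every tuple and every positive `φ`, with the same
constant `C` (this is why `N_j` rather than `‖R⁰_j x‖` is used). Testing against positive norming
functionals (Hahn–Banach for `x ↦ ‖x⁺‖`) gives `‖T x‖ ≤ 2C ∏ N_j(x_j)`, so `T` factors through the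
normed quotients `X_j = E_j / ker N_j` as a continuous `S`. Since `N_j` is the `L_{p_j}`-norm on
positive vectors, the quotient maps `R_j` are positive `p_j`-summing with constant `1`, and
Hölder's inequality for the exponents `r*`, `r` turns the extended domination into the Cohen
estimate for `S`.
-/

open MeasureTheory

universe u v

/-- The positive part of the dual unit ball, with the weak-* topology. -/
def PosDualBall (E : Type*) [NormedAddCommGroup E] [Lattice E] [IsOrderedAddMonoid E] [HasSolidNorm E] [NormedSpace ℝ E] : Type _ :=
  {φ : WeakDual ℝ E // (∀ x : E, |φ x| ≤ ‖x‖) ∧ ∀ x : E, 0 ≤ x → 0 ≤ φ x}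

instance (E : Type*) [NormedAddCommGroup E] [Lattice E] [IsOrderedAddMonoid E] [HasSolidNorm E] [NormedSpace ℝ E] :
    TopologicalSpace (PosDualBall E) :=
  inferInstanceAs (TopologicalSpace (Subtype _))

noncomputable instance (E : Type*) [NormedAddCommGroup E] [Lattice E] [IsOrderedAddMonoid E] [HasSolidNorm E] [NormedSpace ℝ E] :
    MeasurableSpace (PosDualBall E) := borel _

/-- The positive part of the bidual unit ball, with the weak-* topology. -/
def PosBidualBall (F : Type*) [NormedAddCommGroup F] [Lattice F] [IsOrderedAddMonoid F] [HasSolidNorm F] [NormedSpace ℝ F] : Type _ :=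
  {ψ : WeakDual ℝ (F →L[ℝ] ℝ) // (∀ φ : F →L[ℝ] ℝ, |ψ φ| ≤ ‖φ‖) ∧
    ∀ φ : F →L[ℝ] ℝ, (∀ y, 0 ≤ y → 0 ≤ φ y) → 0 ≤ ψ φ}

instance (F : Type*) [NormedAddCommGroup F] [Lattice F] [IsOrderedAddMonoid F] [HasSolidNorm F] [NormedSpace ℝ F] :
    TopologicalSpace (PosBidualBall F) :=
  inferInstanceAs (TopologicalSpace (Subtype _))

noncomputable instance (F : Type*) [NormedAddCommGroup F] [Lattice F] [IsOrderedAddMonoid F] [HasSolidNorm F] [NormedSpace ℝ F] :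
    MeasurableSpace (PosBidualBall F) := borel _

/-- The weak `ℓ_p` norm of a finite positive family, over the positive dual unit ball. -/
noncomputable def wnormPos {E : Type*} [NormedAddCommGroup E] [Lattice E] [IsOrderedAddMonoid E] [HasSolidNorm E] [NormedSpace ℝ E]
    (p : ℝ) {n : ℕ} (x : Fin n → E) : ℝ :=
  sSup {s : ℝ | ∃ φ : E →L[ℝ] ℝ, ‖φ‖ ≤ 1 ∧ (∀ y, 0 ≤ y → 0 ≤ φ y) ∧
    s = (∑ i, (φ (x i)) ^ p) ^ (1 / p)}

/-- `R : E → X` is positive `p`-summing with constant `C`. -/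
def IsPosSumming {E : Type*} [NormedAddCommGroup E] [Lattice E] [IsOrderedAddMonoid E] [HasSolidNorm E] [NormedSpace ℝ E]
    {X : Type*} [NormedAddCommGroup X] [NormedSpace ℝ X]
    (p : ℝ) (R : E →L[ℝ] X) (C : ℝ) : Prop :=
  ∀ (n : ℕ) (x : Fin n → E), (∀ i, 0 ≤ x i) →
    (∑ i, ‖R (x i)‖ ^ p) ^ (1 / p) ≤ C * wnormPos p x

/-- `S` is Cohen positive strongly `r*`-summing with constant `C`. -/
def IsCohenPosStronglySumming {m : ℕ} {X : Fin m → Type*}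
    [∀ j, NormedAddCommGroup (X j)] [∀ j, NormedSpace ℝ (X j)]
    {F : Type*} [NormedAddCommGroup F] [Lattice F] [IsOrderedAddMonoid F] [HasSolidNorm F] [NormedSpace ℝ F]
    (rstar r : ℝ) (S : ContinuousMultilinearMap ℝ X F) (C : ℝ) : Prop :=
  ∀ (n : ℕ) (z : Fin n → ∀ j, X j) (y : Fin n → (F →L[ℝ] ℝ)),
    (∀ i, ∀ w, 0 ≤ w → 0 ≤ y i w) →
    ∑ i, |y i (S (z i))| ≤
      C * (∑ i, ∏ j, ‖z i j‖ ^ rstar) ^ (1 / rstar) *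
        sSup {s : ℝ | ∃ ψ : (F →L[ℝ] ℝ) →L[ℝ] ℝ, ‖ψ‖ ≤ 1 ∧
          s = (∑ i, |ψ (y i)| ^ r) ^ (1 / r)}

open Filter Topology
open scoped ENNReal

section OrderedModule

variable {E : Type*} [AddCommGroup E] [Lattice E]

theorem posPart_add_le [IsOrderedAddMonoid E] (x y : E) : (x + y)⁺ ≤ x⁺ + y⁺ :=
  sup_le (add_le_add (le_posPart x) (le_posPart y))
    (add_nonneg (posPart_nonneg _) (posPart_nonneg _))

theorem posPart_smul_of_nonneg [Module ℝ E] [PosSMulMono ℝ E] {c : ℝ} (hc : 0 ≤ c) (x : E) :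
    (c • x)⁺ = c • x⁺ := by
  rcases hc.eq_or_lt with rfl | hc
  · simp
  · have h : c • (x ⊔ 0) = c • x ⊔ c • 0 := (OrderIso.smulRight hc).map_sup x 0
    rw [posPart_def, posPart_def, h, smul_zero]

end OrderedModule

section NormedLattice

variable {G : Type*} [NormedAddCommGroup G] [Lattice G] [IsOrderedAddMonoid G] [HasSolidNorm G]

theorem norm_le_norm_of_nonneg_of_le {a b : G} (ha : 0 ≤ a) (hab : a ≤ b) : ‖a‖ ≤ ‖b‖ :=
  norm_le_norm_of_abs_le_abs <| by rwa [abs_of_nonneg ha, abs_of_nonneg (ha.trans hab)]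

theorem norm_posPart_le (x : G) : ‖x⁺‖ ≤ ‖x‖ :=
  norm_le_norm_of_abs_le_abs <| by
    rw [abs_of_nonneg (posPart_nonneg x)]
    exact sup_le (le_abs_self x) (abs_nonneg x)

variable [NormedSpace ℝ G]

/-- The positive cone is closed and `2 • a ≥ 0 → a ≥ 0`, so it contains all dyadic multiples of
a positive vector and hence, by density, all its nonnegative multiples. -/
theorem smul_nonneg_of_hasSolidNorm {c : ℝ} {x : G} (hc : 0 ≤ c) (hx : 0 ≤ x) : 0 ≤ c • x := by
  have halve : ∀ {d : ℝ}, 0 ≤ d • x → 0 ≤ (d / 2) • x := fun h =>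
    nsmul_two_semiclosed (by rwa [two_nsmul, ← add_smul, add_halves])
  have dyadic : ∀ k n : ℕ, 0 ≤ ((k : ℝ) / 2 ^ n) • x := by
    intro k n
    induction n with
    | zero => simpa [Nat.cast_smul_eq_nsmul] using nsmul_nonneg hx k
    | succ n ih => simpa [pow_succ, div_div] using halve ih
  have lim : Tendsto (fun n : ℕ => ((⌊c * 2 ^ n⌋₊ : ℝ) / 2 ^ n) • x) atTop (𝓝 (c • x)) :=
    ((tendsto_nat_floor_mul_div_atTop hc).comp
      (tendsto_pow_atTop_atTop_of_one_lt one_lt_two)).smul_const x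
  exact isClosed_nonneg.mem_of_tendsto lim (Eventually.of_forall fun n => dyadic _ n)

instance HasSolidNorm.toPosSMulMono : PosSMulMono ℝ G :=
  PosSMulMono.of_smul_nonneg fun _ hc _ hx => smul_nonneg_of_hasSolidNorm hc hx

theorem exists_pos_functional_eq_norm_posPart (w : G) :
    ∃ φ : G →L[ℝ] ℝ, ‖φ‖ ≤ 1 ∧ (∀ z, 0 ≤ z → 0 ≤ φ z) ∧ φ w = ‖w⁺‖ := by
  obtain rfl | hw := eq_or_ne w 0
  · exact ⟨0, by simp, by simp, by simp⟩
  set N : G → ℝ := fun x => ‖x⁺‖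
  have N_smul : ∀ c : ℝ, 0 < c → ∀ x, N (c • x) = c * N x := fun c hc x => by
    simp only [N, posPart_smul_of_nonneg hc.le, norm_smul, Real.norm_of_nonneg hc.le]
  have N_add : ∀ x y, N (x + y) ≤ N x + N y := fun x y =>
    (norm_le_norm_of_nonneg_of_le (posPart_nonneg _) (posPart_add_le x y)).trans (norm_add_le _ _)
  obtain ⟨g, hgw, hgN⟩ := exists_extension_of_le_sublinear
    (LinearPMap.mkSpanSingleton w (‖w⁺‖ : ℝ) hw) N N_smul N_add (by
      rintro ⟨_, hx⟩
      obtain ⟨c, rfl⟩ := Submodule.mem_span_singleton.1 hx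
      simp only [LinearPMap.mkSpanSingleton'_apply, RingHom.id_apply, smul_eq_mul]
      rcases le_or_gt c 0 with hc | hc
      · exact (mul_nonpos_of_nonpos_of_nonneg hc (norm_nonneg _)).trans (norm_nonneg _)
      · exact (N_smul c hc w).ge)
  have hg_neg : ∀ x, -g x ≤ ‖x⁻‖ := fun x => by simpa [N] using hgN (-x)
  have hg_abs : ∀ x, |g x| ≤ ‖x‖ := fun x => by
    have : ‖x⁻‖ ≤ ‖x‖ := by simpa using norm_posPart_le (-x)
    exact abs_le.2 ⟨by linarith [hg_neg x], (hgN x).trans (norm_posPart_le x)⟩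
  refine ⟨g.mkContinuous 1 fun x => by simpa using hg_abs x,
    LinearMap.mkContinuous_norm_le _ zero_le_one _, fun z hz => ?_, ?_⟩
  · simpa [negPart_eq_zero.2 hz] using hg_neg z
  · exact (hgw ⟨w, Submodule.mem_span_singleton_self w⟩).trans
      (LinearPMap.mkSpanSingleton_apply ℝ ℝ hw _)

theorem norm_le_two_mul_of_forall_pos_functional {y : G} {M : ℝ}
    (h : ∀ φ : G →L[ℝ] ℝ, ‖φ‖ ≤ 1 → (∀ z, 0 ≤ z → 0 ≤ φ z) → |φ y| ≤ M) : ‖y‖ ≤ 2 * M := by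
  obtain ⟨φ₁, hφ₁, hpos₁, h₁⟩ := exists_pos_functional_eq_norm_posPart y
  obtain ⟨φ₂, hφ₂, hpos₂, h₂⟩ := exists_pos_functional_eq_norm_posPart (-y)
  rw [map_neg, posPart_neg] at h₂
  calc ‖y‖ = ‖y⁺ - y⁻‖ := by rw [posPart_sub_negPart]
    _ ≤ ‖y⁺‖ + ‖y⁻‖ := norm_sub_le _ _
    _ ≤ 2 * M := by
      rw [← h₁, ← h₂]
      linarith [le_abs_self (φ₁ y), neg_abs_le (φ₂ y), h φ₁ hφ₁ hpos₁, h φ₂ hφ₂ hpos₂]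

end NormedLattice

section PosNegSeminorm

variable {E V : Type*} [AddCommGroup E] [Lattice E] [Module ℝ E] [NormedAddCommGroup V] [Lattice V]
  [NormedSpace ℝ V]

theorem norm_apply_posPart_add_le [IsOrderedAddMonoid E] [IsOrderedAddMonoid V] [HasSolidNorm V]
    (L : E →ₚ[ℝ] V) (x y : E) :
    ‖L (x + y)⁺‖ ≤ ‖L x⁺‖ + ‖L y⁺‖ :=
  calc ‖L (x + y)⁺‖ ≤ ‖L x⁺ + L y⁺‖ :=
        norm_le_norm_of_nonneg_of_le (L.map_nonneg (posPart_nonneg _))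
          (map_add L _ _ ▸ OrderHomClass.mono L (posPart_add_le x y))
    _ ≤ ‖L x⁺‖ + ‖L y⁺‖ := norm_add_le _ _

theorem norm_apply_posPart_smul [PosSMulMono ℝ E] (L : E →ₚ[ℝ] V) {c : ℝ} (hc : 0 ≤ c) (x : E) :
    ‖L (c • x)⁺‖ = c * ‖L x⁺‖ := by
  rw [posPart_smul_of_nonneg hc, map_smul, norm_smul, Real.norm_of_nonneg hc]

noncomputable def posNegSeminorm [IsOrderedAddMonoid E] [PosSMulMono ℝ E] [IsOrderedAddMonoid V]
    [HasSolidNorm V] (L : E →ₚ[ℝ] V) : Seminorm ℝ E :=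
  Seminorm.of (fun x => ‖L x⁺‖ + ‖L x⁻‖)
    (fun x y => by
      have h := norm_apply_posPart_add_le L (-x) (-y)
      rw [← neg_add, posPart_neg, posPart_neg, posPart_neg] at h
      linarith [norm_apply_posPart_add_le L x y])
    (fun c x => by
      rcases le_total 0 c with hc | hc
      · rw [← posPart_neg, ← smul_neg, norm_apply_posPart_smul L hc, norm_apply_posPart_smul L hc,
          posPart_neg, Real.norm_of_nonneg hc, mul_add]
      · rw [← posPart_neg, ← neg_smul, norm_apply_posPart_smul L (neg_nonneg.2 hc),
          ← neg_smul_neg, norm_apply_posPart_smul L (neg_nonneg.2 hc), posPart_neg,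
          Real.norm_of_nonpos hc, mul_add, add_comm])

theorem posNegSeminorm_apply [IsOrderedAddMonoid E] [PosSMulMono ℝ E] [IsOrderedAddMonoid V]
    [HasSolidNorm V] (L : E →ₚ[ℝ] V) (x : E) :
    posNegSeminorm L x = ‖L x⁺‖ + ‖L x⁻‖ := rfl

end PosNegSeminorm

theorem posNegSeminorm_le_two_mul_norm {E V : Type*} [NormedAddCommGroup E] [Lattice E]
    [IsOrderedAddMonoid E] [HasSolidNorm E] [NormedSpace ℝ E] [NormedAddCommGroup V] [Lattice V]
    [IsOrderedAddMonoid V] [HasSolidNorm V] [NormedSpace ℝ V] (L : E →ₚ[ℝ] V)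
    (hL : ∀ x, ‖L x‖ ≤ ‖x‖) (x : E) : posNegSeminorm L x ≤ 2 * ‖x‖ := by
  have : ‖x⁻‖ ≤ ‖x‖ := by simpa using norm_posPart_le (-x)
  rw [posNegSeminorm_apply]
  linarith [hL x⁺, hL x⁻, norm_posPart_le x]

theorem MultilinearMap.abs_apply_le_mul_prod_posPart_add_negPart {ι : Type*} [Fintype ι]
    [DecidableEq ι] {E : ι → Type*} [∀ j, AddCommGroup (E j)] [∀ j, Lattice (E j)]
    [∀ j, IsOrderedAddMonoid (E j)] [∀ j, Module ℝ (E j)] (f : MultilinearMap ℝ E ℝ)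
    (g : ∀ j, E j → ℝ) {K : ℝ} (hf : ∀ x, (∀ j, 0 ≤ x j) → |f x| ≤ K * ∏ j, g j (x j))
    (x : ∀ j, E j) : |f x| ≤ K * ∏ j, (g j (x j)⁺ + g j (x j)⁻) := by
  let part : ∀ j, Bool → E j := fun j b => if b then (x j)⁺ else (x j)⁻
  let sign : Bool → ℝ := fun b => if b then 1 else -1
  have hx : f x = ∑ σ : ι → Bool, f fun j => sign (σ j) • part j (σ j) := by
    rw [← f.map_sum fun j b => sign b • part j b]
    congr 1
    funext j
    simp [part, sign, ← sub_eq_add_neg]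
  have hsign : ∀ σ : ι → Bool, |∏ j, sign (σ j)| = 1 := fun σ => by
    rw [Finset.abs_prod]
    exact Finset.prod_eq_one fun j _ => by cases σ j <;> simp [sign]
  calc |f x| ≤ ∑ σ : ι → Bool, |f fun j => sign (σ j) • part j (σ j)| :=
        hx ▸ Finset.abs_sum_le_sum_abs _ _
    _ = ∑ σ : ι → Bool, |f fun j => part j (σ j)| := by
        simp_rw [f.map_smul_univ, smul_eq_mul, abs_mul, hsign, one_mul]
    _ ≤ ∑ σ : ι → Bool, K * ∏ j, g j (part j (σ j)) :=
        Finset.sum_le_sum fun σ _ => hf _ fun j => by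
          cases σ j
          · exact negPart_nonneg _
          · exact posPart_nonneg _
    _ = K * ∏ j, (g j (x j)⁺ + g j (x j)⁻) := by
        rw [← Finset.mul_sum, ← Fintype.prod_sum fun j b => g j (part j b)]
        simp [part]

section WithSeminorm

variable {E : Type*} [AddCommGroup E] [Module ℝ E]

def WithSeminorm (_N : Seminorm ℝ E) : Type _ := E

variable (N : Seminorm ℝ E)

noncomputable instance : SeminormedAddCommGroup (WithSeminorm N) :=
  N.toAddGroupSeminorm.toSeminormedAddCommGroup

instance : Module ℝ (WithSeminorm N) := inferInstanceAs (Module ℝ E)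

noncomputable instance : NormedSpace ℝ (WithSeminorm N) where
  norm_smul_le c x := (map_smul_eq_mul N c x).le

def WithSeminorm.equiv : E ≃ₗ[ℝ] WithSeminorm N := LinearEquiv.refl ℝ E

theorem WithSeminorm.norm_equiv (x : E) : ‖WithSeminorm.equiv N x‖ = N x := rfl

end WithSeminorm

noncomputable def Seminorm.toSeparationQuotientCLM {E : Type*} [NormedAddCommGroup E]
    [NormedSpace ℝ E] (N : Seminorm ℝ E) {K : ℝ} (hN : ∀ x, N x ≤ K * ‖x‖) :
    E →L[ℝ] SeparationQuotient (WithSeminorm N) :=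
  (SeparationQuotient.mkCLM ℝ _).comp ((WithSeminorm.equiv N).toLinearMap.mkContinuous K hN)

theorem Seminorm.norm_toSeparationQuotientCLM {E : Type*} [NormedAddCommGroup E]
    [NormedSpace ℝ E] (N : Seminorm ℝ E) {K : ℝ} (hN : ∀ x, N x ≤ K * ‖x‖) (x : E) :
    ‖N.toSeparationQuotientCLM hN x‖ = N x := rfl

section Descend

variable {ι : Type*} [Fintype ι] {E : ι → Type*} [∀ j, AddCommGroup (E j)] [∀ j, Module ℝ (E j)]
  {F : Type*} [NormedAddCommGroup F] [NormedSpace ℝ F]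

noncomputable def MultilinearMap.mkContinuousWithSeminorm (T : MultilinearMap ℝ E F)
    (N : ∀ j, Seminorm ℝ (E j)) {K : ℝ} (hT : ∀ x, ‖T x‖ ≤ K * ∏ j, N j (x j)) :
    ContinuousMultilinearMap ℝ (fun j => WithSeminorm (N j)) F :=
  (T.compLinearMap fun j => (WithSeminorm.equiv (N j)).symm.toLinearMap).mkContinuous K hT

noncomputable def MultilinearMap.descend (T : MultilinearMap ℝ E F) (N : ∀ j, Seminorm ℝ (E j))
    {K : ℝ} (hT : ∀ x, ‖T x‖ ≤ K * ∏ j, N j (x j)) :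
    ContinuousMultilinearMap ℝ (fun j => SeparationQuotient (WithSeminorm (N j))) F :=
  (T.mkContinuousWithSeminorm N hT).compContinuousLinearMap fun _ => SeparationQuotient.outCLM ℝ _

theorem MultilinearMap.descend_mk (T : MultilinearMap ℝ E F) (N : ∀ j, Seminorm ℝ (E j)) {K : ℝ}
    (hT : ∀ x, ‖T x‖ ≤ K * ∏ j, N j (x j)) (x : ∀ j, E j) :
    T.descend N hT (fun j => SeparationQuotient.mk (WithSeminorm.equiv (N j) (x j))) = T x := by
  have h : Inseparable (fun j => SeparationQuotient.outCLM ℝ _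
      (SeparationQuotient.mk (WithSeminorm.equiv (N j) (x j))))
      (fun j => WithSeminorm.equiv (N j) (x j)) :=
    inseparable_pi.2 fun j => SeparationQuotient.mk_eq_mk.1 (SeparationQuotient.mk_outCLM ℝ _)
  -- `F` is Hausdorff, so a continuous map agrees at inseparable points.
  exact (h.map (T.mkContinuousWithSeminorm N hT).cont).eq

end Descend

theorem integrable_rpow_of_continuous {Ω : Type*} [TopologicalSpace Ω] [MeasurableSpace Ω]
    [OpensMeasurableSpace Ω] {μ : Measure Ω} [IsFiniteMeasure μ] {f : Ω → ℝ} (hf : Continuous f)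
    {M : ℝ} (hfM : ∀ ω, |f ω| ≤ M) {p : ℝ} (hp : 0 ≤ p) :
    Integrable (fun ω => f ω ^ p) μ :=
  .of_bound ((Real.continuous_rpow_const hp).comp hf).aestronglyMeasurable (M ^ p) <|
    ae_of_all _ fun ω => (Real.abs_rpow_le_abs_rpow _ _).trans <|
      Real.rpow_le_rpow (abs_nonneg _) (hfM ω) hp

theorem rpow_sum_rpow_le_of_le_integral {ι Ω : Type*} [MeasurableSpace Ω] {μ : Measure Ω}
    [IsProbabilityMeasure μ] (s : Finset ι) {a : ι → ℝ} {f : ι → Ω → ℝ} {p M : ℝ} (hp : 0 < p)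
    (ha0 : ∀ i ∈ s, 0 ≤ a i) (hf0 : ∀ i ∈ s, ∀ ω, 0 ≤ f i ω)
    (hfi : ∀ i ∈ s, Integrable (fun ω => f i ω ^ p) μ)
    (ha : ∀ i ∈ s, a i ≤ (∫ ω, f i ω ^ p ∂μ) ^ (1 / p))
    (hM : ∀ ω, (∑ i ∈ s, f i ω ^ p) ^ (1 / p) ≤ M) :
    (∑ i ∈ s, a i ^ p) ^ (1 / p) ≤ M := by
  have hsum0 : ∀ ω, 0 ≤ ∑ i ∈ s, f i ω ^ p := fun ω =>
    Finset.sum_nonneg fun i hi => Real.rpow_nonneg (hf0 i hi ω) p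
  have hM0 : 0 ≤ M := by
    obtain ⟨ω⟩ := nonempty_of_isProbabilityMeasure μ
    exact (Real.rpow_nonneg (hsum0 ω) _).trans (hM ω)
  have hpointwise : ∀ ω, ∑ i ∈ s, f i ω ^ p ≤ M ^ p := fun ω => by
    rw [← Real.rpow_inv_le_iff_of_pos (hsum0 ω) hM0 hp, ← one_div]
    exact hM ω
  rw [one_div, Real.rpow_inv_le_iff_of_pos (Finset.sum_nonneg fun i hi =>
    Real.rpow_nonneg (ha0 i hi) p) hM0 hp]
  calc ∑ i ∈ s, a i ^ p ≤ ∑ i ∈ s, ∫ ω, f i ω ^ p ∂μ := Finset.sum_le_sum fun i hi => by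
        rw [← Real.le_rpow_inv_iff_of_pos (ha0 i hi)
          (integral_nonneg fun ω => Real.rpow_nonneg (hf0 i hi ω) p) hp, ← one_div]
        exact ha i hi
    _ = ∫ ω, ∑ i ∈ s, f i ω ^ p ∂μ := (integral_finsetSum s hfi).symm
    _ ≤ ∫ _, M ^ p ∂μ := integral_mono_of_nonneg (ae_of_all _ hsum0) (integrable_const _)
        (ae_of_all _ hpointwise)
    _ = M ^ p := by simp

/-- For `r = 1` the hypothesis `1 / r + 1 / rstar = 1` forces `rstar = 0` (as `1 / 0 = 0`), so the
first factor on the right degenerates to `x ^ 0 = 1`; hence the assumption `a ≤ 1` in that case. -/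
theorem sum_mul_le_rpow_sum_mul_rpow_sum {ι : Type*} (s : Finset ι) {r rstar : ℝ} (hr : 1 ≤ r)
    (hconj : 1 / r + 1 / rstar = 1) {a b : ι → ℝ} (ha : ∀ i, 0 ≤ a i) (hb : ∀ i, 0 ≤ b i)
    (ha1 : r = 1 → ∀ i, a i ≤ 1) :
    ∑ i ∈ s, a i * b i ≤ (∑ i ∈ s, a i ^ rstar) ^ (1 / rstar) * (∑ i ∈ s, b i ^ r) ^ (1 / r) := by
  rcases hr.lt_or_eq with hr | rfl
  · have : rstar.HolderConjugate r :=
      (Real.holderConjugate_iff.2 ⟨hr, by simpa only [one_div] using hconj⟩).symm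
    exact Real.inner_le_Lp_mul_Lq_of_nonneg s this (fun i _ => ha i) (fun i _ => hb i)
  · have hrstar : rstar = 0 := by simpa using hconj
    simpa [hrstar] using Finset.sum_le_sum fun i _ => mul_le_of_le_one_left (hb i) (ha1 rfl i)

theorem eq_zero_of_one_div_eq_sum_add_one {m : ℕ} {p : ℝ} {pj : Fin m → ℝ} (hp : 1 ≤ p)
    (hpj : ∀ j, 0 < pj j) (h : 1 / p = (∑ j, 1 / pj j) + 1) : m = 0 := by
  by_contra hm
  have hsum : 0 < ∑ j, 1 / pj j := Finset.sum_pos (fun j _ => one_div_pos.2 (hpj j))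
    (Finset.univ_nonempty_iff.2 ⟨⟨0, Nat.pos_of_ne_zero hm⟩⟩)
  have : 1 / p ≤ 1 := (div_le_one (by linarith)).2 hp
  linarith

section PosDualBall

variable {E : Type*} [NormedAddCommGroup E] [Lattice E] [IsOrderedAddMonoid E] [HasSolidNorm E]
  [NormedSpace ℝ E]

instance : BorelSpace (PosDualBall E) := ⟨rfl⟩

namespace PosDualBall

theorem continuous_eval (x : E) : Continuous fun ω : PosDualBall E => ω.1 x :=
  (WeakDual.eval_continuous x).comp continuous_subtype_val

theorem norm_le_one (ω : PosDualBall E) : ‖WeakDual.toStrongDual ω.1‖ ≤ 1 :=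
  ContinuousLinearMap.opNorm_le_bound _ zero_le_one fun x => by simpa using ω.2.1 x

theorem memLp_eval (p : ℝ≥0∞) (μ : Measure (PosDualBall E)) [IsFiniteMeasure μ] (x : E) :
    MemLp (fun ω : PosDualBall E => ω.1 x) p μ :=
  .of_bound (continuous_eval x).aestronglyMeasurable ‖x‖ (ae_of_all _ fun ω => ω.2.1 x)

/-- The paper's `R⁰ : E → L_p(μ)`, `x ↦ (ω ↦ ω x)`. -/
noncomputable def evalLp (p : ℝ≥0∞) (μ : Measure (PosDualBall E)) [IsFiniteMeasure μ] :
    E →ₚ[ℝ] Lp ℝ p μ :=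
  .mk₀
    { toFun := fun x => (memLp_eval p μ x).toLp
      map_add' := fun x y => by
        rw [← MemLp.toLp_add]
        exact MemLp.toLp_congr _ _ (ae_of_all _ fun ω => map_add ω.1 x y)
      map_smul' := fun c x => by
        rw [RingHom.id_apply, ← MemLp.toLp_const_smul]
        exact MemLp.toLp_congr _ _ (ae_of_all _ fun ω => map_smul ω.1 c x) }
    fun x hx => by
      rw [← Lp.coeFn_nonneg]
      filter_upwards [MemLp.coeFn_toLp (memLp_eval p μ x)] with ω hω
      simpa [hω] using ω.2.2 x hx

theorem norm_evalLp_le (p : ℝ≥0∞) [Fact (1 ≤ p)] (μ : Measure (PosDualBall E))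
    [IsProbabilityMeasure μ] (x : E) : ‖evalLp p μ x‖ ≤ ‖x‖ := by
  have := Lp.norm_le_of_ae_bound (f := evalLp p μ x) (norm_nonneg x) <| by
    filter_upwards [MemLp.coeFn_toLp (memLp_eval p μ x)] with ω hω
    exact (congrArg (‖·‖) hω).trans_le (ω.2.1 x)
  simpa [measureUnivNNReal] using this

theorem norm_evalLp_of_nonneg {p : ℝ} (hp : 0 < p) (μ : Measure (PosDualBall E))
    [IsFiniteMeasure μ] {x : E} (hx : 0 ≤ x) :
    ‖evalLp (ENNReal.ofReal p) μ x‖ = (∫ ω, (ω.1 x) ^ p ∂μ) ^ (1 / p) := by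
  change ‖(memLp_eval _ μ x).toLp‖ = _
  rw [Lp.norm_toLp, MemLp.eLpNorm_eq_integral_rpow_norm (by simpa using hp)
    ENNReal.ofReal_ne_top (memLp_eval _ μ x), ENNReal.toReal_ofReal (by positivity),
    ENNReal.toReal_ofReal hp.le, one_div]
  congr 2
  exact funext fun ω : PosDualBall E => by rw [Real.norm_of_nonneg (ω.2.2 x hx)]

end PosDualBall

theorem rpow_sum_le_wnormPos {p : ℝ} (hp : 0 < p) {n : ℕ} {x : Fin n → E} (hx : ∀ i, 0 ≤ x i)
    {φ : E →L[ℝ] ℝ} (hφ : ‖φ‖ ≤ 1) (hφpos : ∀ y, 0 ≤ y → 0 ≤ φ y) :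
    (∑ i, φ (x i) ^ p) ^ (1 / p) ≤ wnormPos p x := by
  refine le_csSup ⟨(∑ i, ‖x i‖ ^ p) ^ (1 / p), ?_⟩ ⟨φ, hφ, hφpos, rfl⟩
  rintro _ ⟨ψ, hψ, hψpos, rfl⟩
  have hψx : ∀ i, ψ (x i) ≤ ‖x i‖ := fun i =>
    (le_abs_self _).trans ((ψ.le_opNorm _).trans (mul_le_of_le_one_left (norm_nonneg _) hψ))
  exact Real.rpow_le_rpow (Finset.sum_nonneg fun i _ => Real.rpow_nonneg (hψpos _ (hx i)) p)
    (Finset.sum_le_sum fun i _ => Real.rpow_le_rpow (hψpos _ (hx i)) (hψx i) hp.le) (by positivity)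

theorem isPosSumming_of_norm_le {X : Type*} [NormedAddCommGroup X] [NormedSpace ℝ X] {p : ℝ}
    (hp : 0 < p) (μ : Measure (PosDualBall E)) [IsProbabilityMeasure μ] (R : E →L[ℝ] X)
    (hR : ∀ x, 0 ≤ x → ‖R x‖ ≤ (∫ ω, (ω.1 x) ^ p ∂μ) ^ (1 / p)) : IsPosSumming p R 1 := by
  intro n x hx
  rw [one_mul]
  exact rpow_sum_rpow_le_of_le_integral Finset.univ hp (fun _ _ => norm_nonneg _)
    (fun i _ ω => ω.2.2 _ (hx i))
    (fun i _ => integrable_rpow_of_continuous (PosDualBall.continuous_eval _)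
      (fun ω => ω.2.1 _) hp.le)
    (fun i _ => hR _ (hx i))
    (fun ω => rpow_sum_le_wnormPos hp hx (PosDualBall.norm_le_one ω) ω.2.2)

end PosDualBall

theorem rpow_sum_abs_rpow_le_sSup {F : Type*} [NormedAddCommGroup F] [NormedSpace ℝ F] {r : ℝ}
    (hr : 0 < r) {n : ℕ} (y : Fin n → F →L[ℝ] ℝ) {ψ : (F →L[ℝ] ℝ) →L[ℝ] ℝ} (hψ : ‖ψ‖ ≤ 1) :
    (∑ i, |ψ (y i)| ^ r) ^ (1 / r) ≤
      sSup {s : ℝ | ∃ ψ : (F →L[ℝ] ℝ) →L[ℝ] ℝ, ‖ψ‖ ≤ 1 ∧ s = (∑ i, |ψ (y i)| ^ r) ^ (1 / r)} := by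
  refine le_csSup ⟨(∑ i, ‖y i‖ ^ r) ^ (1 / r), ?_⟩ ⟨ψ, hψ, rfl⟩
  rintro _ ⟨χ, hχ, rfl⟩
  have hχy : ∀ i, |χ (y i)| ≤ ‖y i‖ := fun i =>
    (χ.le_opNorm _).trans (mul_le_of_le_one_left (norm_nonneg _) hχ)
  exact Real.rpow_le_rpow (Finset.sum_nonneg fun i _ => Real.rpow_nonneg (abs_nonneg _) r)
    (Finset.sum_le_sum fun i _ => Real.rpow_le_rpow (abs_nonneg _) (hχy i) hr.le) (by positivity)

section PosBidualBall

variable {F : Type*} [NormedAddCommGroup F] [Lattice F] [IsOrderedAddMonoid F] [HasSolidNorm F]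
  [NormedSpace ℝ F]

instance : BorelSpace (PosBidualBall F) := ⟨rfl⟩

namespace PosBidualBall

theorem continuous_eval (φ : F →L[ℝ] ℝ) : Continuous fun ψ : PosBidualBall F => ψ.1 φ :=
  (WeakDual.eval_continuous φ).comp continuous_subtype_val

theorem norm_le_one (ψ : PosBidualBall F) : ‖WeakDual.toStrongDual ψ.1‖ ≤ 1 :=
  ContinuousLinearMap.opNorm_le_bound _ zero_le_one fun φ => by simpa using ψ.2.1 φ

theorem rpow_integral_rpow_le_norm {r : ℝ} (hr : 0 < r) (ν : Measure (PosBidualBall F))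
    [IsProbabilityMeasure ν] {φ : F →L[ℝ] ℝ} (hφ : ∀ z, 0 ≤ z → 0 ≤ φ z) :
    (∫ ψ : PosBidualBall F, (ψ.1 φ) ^ r ∂ν) ^ (1 / r) ≤ ‖φ‖ := by
  rw [one_div, Real.rpow_inv_le_iff_of_pos
    (integral_nonneg fun ψ => Real.rpow_nonneg (ψ.2.2 φ hφ) r) (norm_nonneg _) hr]
  calc ∫ ψ : PosBidualBall F, (ψ.1 φ) ^ r ∂ν ≤ ∫ _, ‖φ‖ ^ r ∂ν :=
        integral_mono_of_nonneg (ae_of_all _ fun ψ => Real.rpow_nonneg (ψ.2.2 φ hφ) r)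
          (integrable_const _) (ae_of_all _ fun ψ => Real.rpow_le_rpow (ψ.2.2 φ hφ)
            ((le_abs_self _).trans (ψ.2.1 φ)) hr.le)
    _ = ‖φ‖ ^ r := by simp

end PosBidualBall

theorem isCohenPosStronglySumming_of_le {m : ℕ} {X : Fin m → Type*}
    [∀ j, NormedAddCommGroup (X j)] [∀ j, NormedSpace ℝ (X j)] {r rstar C : ℝ} (hr : 1 ≤ r)
    (hconj : 1 / r + 1 / rstar = 1) (hrm : r = 1 → m = 0) (hC : 0 ≤ C)
    (ν : Measure (PosBidualBall F)) [IsProbabilityMeasure ν] (S : ContinuousMultilinearMap ℝ X F)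
    (hS : ∀ z (y : F →L[ℝ] ℝ), (∀ w, 0 ≤ w → 0 ≤ y w) →
      |y (S z)| ≤ C * (∏ j, ‖z j‖) * (∫ ψ : PosBidualBall F, (ψ.1 y) ^ r ∂ν) ^ (1 / r)) :
    IsCohenPosStronglySumming rstar r S C := by
  intro n z y hy
  have hr0 : 0 < r := zero_lt_one.trans_le hr
  set J : Fin n → ℝ := fun i => (∫ ψ : PosBidualBall F, (ψ.1 (y i)) ^ r ∂ν) ^ (1 / r)
  have hJ0 : ∀ i, 0 ≤ J i := fun i =>
    Real.rpow_nonneg (integral_nonneg fun ψ => Real.rpow_nonneg (ψ.2.2 _ (hy i)) r) _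
  have hz0 : ∀ i, 0 ≤ ∏ j, ‖z i j‖ := fun i => Finset.prod_nonneg fun j _ => norm_nonneg _
  have holder := sum_mul_le_rpow_sum_mul_rpow_sum Finset.univ hr hconj hz0 hJ0 fun h i => by
    obtain rfl := hrm h
    simp
  have hJ : (∑ i, J i ^ r) ^ (1 / r) ≤
      sSup {s : ℝ | ∃ ψ : (F →L[ℝ] ℝ) →L[ℝ] ℝ, ‖ψ‖ ≤ 1 ∧ s = (∑ i, |ψ (y i)| ^ r) ^ (1 / r)} :=
    rpow_sum_rpow_le_of_le_integral Finset.univ hr0 (fun i _ => hJ0 i)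
      (fun i _ ψ => ψ.2.2 _ (hy i))
      (fun i _ => integrable_rpow_of_continuous (PosBidualBall.continuous_eval _)
        (fun ψ => ψ.2.1 _) hr0.le)
      (fun i _ => le_rfl) fun ψ => by
        have h := rpow_sum_abs_rpow_le_sSup hr0 y (PosBidualBall.norm_le_one ψ)
        simpa [abs_of_nonneg (ψ.2.2 _ (hy _))] using h
  calc ∑ i, |y i (S (z i))| ≤ ∑ i, C * ((∏ j, ‖z i j‖) * J i) :=
        Finset.sum_le_sum fun i _ => (hS (z i) (y i) (hy i)).trans_eq (mul_assoc _ _ _)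
    _ = C * ∑ i, (∏ j, ‖z i j‖) * J i := (Finset.mul_sum _ _ _).symm
    _ ≤ C * ((∑ i, ∏ j, ‖z i j‖ ^ rstar) ^ (1 / rstar) *
          sSup {s : ℝ | ∃ ψ : (F →L[ℝ] ℝ) →L[ℝ] ℝ,
            ‖ψ‖ ≤ 1 ∧ s = (∑ i, |ψ (y i)| ^ r) ^ (1 / r)}) := by
        simp_rw [Real.finsetProd_rpow _ _ (fun j _ => norm_nonneg _)]
        gcongr
        exact holder.trans (by gcongr)
    _ = _ := (mul_assoc _ _ _).symm

end PosBidualBall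

section Dominated

variable {m : ℕ} {E : Fin m → Type*} [∀ j, NormedAddCommGroup (E j)] [∀ j, Lattice (E j)]
  [∀ j, IsOrderedAddMonoid (E j)] [∀ j, HasSolidNorm (E j)] [∀ j, NormedSpace ℝ (E j)]
  {F : Type*} [NormedAddCommGroup F] [Lattice F] [IsOrderedAddMonoid F] [HasSolidNorm F]
  [NormedSpace ℝ F]

def IsPosDominated (T : ContinuousMultilinearMap ℝ E F) (pj : Fin m → ℝ) (r C : ℝ)
    (μ : ∀ j, Measure (PosDualBall (E j))) (ν : Measure (PosBidualBall F)) : Prop :=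
  ∀ (x : ∀ j, E j) (φ : F →L[ℝ] ℝ), (∀ j, 0 ≤ x j) → (∀ z, 0 ≤ z → 0 ≤ φ z) →
    |φ (T x)| ≤
      C * (∏ j, (∫ ω : PosDualBall (E j), (ω.1 (x j)) ^ (pj j) ∂(μ j)) ^ (1 / pj j)) *
        (∫ ψ : PosBidualBall F, (ψ.1 φ) ^ r ∂ν) ^ (1 / r)

variable {T : ContinuousMultilinearMap ℝ E F} {pj : Fin m → ℝ} {r C : ℝ}
  {μ : ∀ j, Measure (PosDualBall (E j))} [∀ j, IsFiniteMeasure (μ j)]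
  [∀ j, Fact (1 ≤ ENNReal.ofReal (pj j))] {ν : Measure (PosBidualBall F)}

theorem IsPosDominated.abs_apply_le (hT : IsPosDominated T pj r C μ ν) (x : ∀ j, E j)
    {φ : F →L[ℝ] ℝ} (hφ : ∀ z, 0 ≤ z → 0 ≤ φ z) :
    |φ (T x)| ≤ C * (∫ ψ : PosBidualBall F, (ψ.1 φ) ^ r ∂ν) ^ (1 / r) *
      ∏ j, posNegSeminorm (PosDualBall.evalLp (ENNReal.ofReal (pj j)) (μ j)) (x j) := by
  have hpj : ∀ j, 0 < pj j := fun j =>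
    zero_lt_one.trans_le (ENNReal.one_le_ofReal.1 (Fact.out : 1 ≤ ENNReal.ofReal (pj j)))
  refine MultilinearMap.abs_apply_le_mul_prod_posPart_add_negPart
    (φ.compContinuousMultilinearMap T).toMultilinearMap
    (fun j y => ‖PosDualBall.evalLp (ENNReal.ofReal (pj j)) (μ j) y‖) (fun x hx => ?_) x
  refine (hT x φ hx hφ).trans_eq ?_
  rw [mul_right_comm, Finset.prod_congr rfl fun j _ =>
    (PosDualBall.norm_evalLp_of_nonneg (hpj j) (μ j) (hx j)).symm]

theorem IsPosDominated.norm_apply_le [IsProbabilityMeasure ν] (hT : IsPosDominated T pj r C μ ν)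
    (hr : 0 < r) (hC : 0 ≤ C) (x : ∀ j, E j) :
    ‖T x‖ ≤
      2 * C * ∏ j, posNegSeminorm (PosDualBall.evalLp (ENNReal.ofReal (pj j)) (μ j)) (x j) := by
  rw [mul_assoc]
  refine norm_le_two_mul_of_forall_pos_functional fun φ hφ hpos =>
    (hT.abs_apply_le x hpos).trans ?_
  exact mul_le_mul_of_nonneg_right (mul_le_of_le_one_right hC
    ((PosBidualBall.rpow_integral_rpow_le_norm hr ν hpos).trans hφ))
    (Finset.prod_nonneg fun j _ => apply_nonneg _ _)

end Dominated

/-- Factorization direction of Kwapień's theorem: a positive `(p₁,…,p_m;r)`-dominated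
operator, given via its Pietsch domination measures, factors as `T = S ∘ (R₁,…,R_m)`
where each `R_j` is positive `p_j`-summing with `π⁺_{p_j}(R_j) ≤ 1` (obtained from the
canonical map into `L_{p_j}(μ_j)`) and `S` is a Cohen positive strongly `r*`-summing
`m`-linear operator. -/
theorem kwapien_factorization_direction
    {m : ℕ} {E : Fin m → Type u}
    [∀ j, NormedAddCommGroup (E j)] [∀ j, Lattice (E j)]
    [∀ j, IsOrderedAddMonoid (E j)] [∀ j, HasSolidNorm (E j)] [∀ j, NormedSpace ℝ (E j)]
    {F : Type v} [NormedAddCommGroup F] [Lattice F] [IsOrderedAddMonoid F] [HasSolidNorm F] [NormedSpace ℝ F]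
    (p r rstar : ℝ) (pj : Fin m → ℝ)
    (hr : 1 ≤ r) (hpj : ∀ j, 1 ≤ pj j) (hp : 1 ≤ p)
    (hhol : 1 / p = (∑ j, 1 / pj j) + 1 / r) (hconj : 1 / r + 1 / rstar = 1)
    (T : ContinuousMultilinearMap ℝ E F) (C : ℝ) (hC : 0 < C)
    (μ : ∀ j, Measure (PosDualBall (E j))) [∀ j, IsProbabilityMeasure (μ j)]
    (ν : Measure (PosBidualBall F)) [IsProbabilityMeasure ν]
    (hdom : ∀ (x : ∀ j, E j) (φ : F →L[ℝ] ℝ),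
      (∀ j, 0 ≤ x j) → (∀ z, 0 ≤ z → 0 ≤ φ z) →
      |φ (T x)| ≤
        C * (∏ j, (∫ ω : PosDualBall (E j), (ω.1 (x j)) ^ (pj j) ∂(μ j)) ^ (1 / pj j)) *
          (∫ ψ : PosBidualBall F, (ψ.1 φ) ^ r ∂ν) ^ (1 / r)) :
    ∃ (X : Fin m → Type u) (_ : ∀ j, NormedAddCommGroup (X j))
      (_ : ∀ j, NormedSpace ℝ (X j)) (R : ∀ j, E j →L[ℝ] X j)
      (S : ContinuousMultilinearMap ℝ X F),
      (∀ j, IsPosSumming (pj j) (R j) 1) ∧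
      IsCohenPosStronglySumming rstar r S C ∧
      ∀ x : ∀ j, E j, T x = S (fun j => R j (x j)) := by
  have : ∀ j, Fact (1 ≤ ENNReal.ofReal (pj j)) := fun j => ⟨ENNReal.one_le_ofReal.2 (hpj j)⟩
  have hpj0 : ∀ j, 0 < pj j := fun j => zero_lt_one.trans_le (hpj j)
  set N := fun j => posNegSeminorm (PosDualBall.evalLp (ENNReal.ofReal (pj j)) (μ j))
  have hT : ∀ x, ‖T x‖ ≤ 2 * C * ∏ j, N j (x j) :=
    IsPosDominated.norm_apply_le hdom (zero_lt_one.trans_le hr) hC.le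
  refine ⟨fun j => SeparationQuotient (WithSeminorm (N j)), fun j => inferInstance,
    fun j => inferInstance, fun j => (N j).toSeparationQuotientCLM
      (posNegSeminorm_le_two_mul_norm _ (PosDualBall.norm_evalLp_le _ (μ j))),
    T.toMultilinearMap.descend N hT, fun j => ?_, ?_,
    fun x => (T.toMultilinearMap.descend_mk N hT x).symm⟩
  · refine isPosSumming_of_norm_le (hpj0 j) (μ j) _ fun x hx => le_of_eq ?_
    rw [Seminorm.norm_toSeparationQuotientCLM, posNegSeminorm_apply, negPart_eq_zero.2 hx,
      posPart_eq_self.2 hx, map_zero, norm_zero, add_zero,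
      PosDualBall.norm_evalLp_of_nonneg (hpj0 j) (μ j) hx]
  · refine isCohenPosStronglySumming_of_le hr hconj
      (fun h => eq_zero_of_one_div_eq_sum_add_one hp hpj0 (by rw [hhol, h, div_one])) hC.le ν _
      fun z y hy => ?_
    obtain ⟨x, rfl⟩ : ∃ x : ∀ j, E j,
        z = fun j => SeparationQuotient.mk (WithSeminorm.equiv (N j) (x j)) :=
      ⟨fun j => (WithSeminorm.equiv (N j)).symm (SeparationQuotient.outCLM ℝ _ (z j)),
        funext fun j => by simp⟩
    simp only [MultilinearMap.descend_mk, SeparationQuotient.norm_mk, WithSeminorm.norm_equiv]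
    exact (IsPosDominated.abs_apply_le hdom x hy).trans_eq (mul_right_comm _ _ _)
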